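/- arXiv:2504.13511 — 2 statements merged into one kernel-verified Lean document; each statement's English description precedes it below -/
import Mathlib

section
/- Let X be zeta-distributed with parameter s > 1. Then for distinct primes p₁, …, p_r and nonnegative integers a₁, …, a_r, P(ν_{p₁}(X) ≥ a₁, …, ν_{p_r}(X) ≥ a_r) = Π_i p_i^{−s a_i}; consequently, the p-adic valuations ν_p(X), for p prime, are independent random variables with P(ν_p(X) = k) = (1 − p⁻ˢ) p^{−sk}. -/
open MeasureTheory ProbabilityTheory

section Aux

variable {Ω : Type*} [MeasurableSpace Ω] (μ : Measure Ω) [IsProbabilityMeasure μ]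

lemma aux_nat_top : (inferInstance : MeasurableSpace ℕ) = ⊤ := rfl

lemma aux_summable {s : ℝ} (hs : 1 < s) : Summable (fun k : ℕ => (k : ℝ) ^ (-s)) :=
  Real.summable_nat_rpow.mpr (by linarith)

lemma aux_summable_pnat {s : ℝ} (hs : 1 < s) : Summable (fun m : ℕ+ => (m : ℝ) ^ (-s)) :=
  (aux_summable hs).comp_injective (fun a b h => PNat.coe_injective h)

lemma aux_Z_pos {s : ℝ} (hs : 1 < s) : 0 < ∑' m : ℕ+, (m : ℝ) ^ (-s) := by
  have h1 : ((1 : ℕ+) : ℝ) ^ (-s) ≤ ∑' m : ℕ+, (m : ℝ) ^ (-s) :=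
    Summable.le_tsum (aux_summable_pnat hs) 1 (fun j _ => Real.rpow_nonneg (by positivity) _)
  simpa using lt_of_lt_of_le (by norm_num : (0:ℝ) < 1) (by simpa using h1)

/-- measure of preimage of a set of positive integers -/
lemma aux_measure_preimage (s : ℝ) (X : Ω → ℕ)
    (hX : Measurable X)
    (hlaw : ∀ k : ℕ, 0 < k →
      μ (X ⁻¹' {k}) = ENNReal.ofReal ((∑' m : ℕ+, (m : ℝ) ^ (-s))⁻¹ * (k : ℝ) ^ (-s)))
    (A : Set ℕ) (hA : 0 ∉ A) :
    μ (X ⁻¹' A) = ∑' k : A, ENNReal.ofReal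
      ((∑' m : ℕ+, (m : ℝ) ^ (-s))⁻¹ * ((k : ℕ) : ℝ) ^ (-s)) := by
  have h1 : X ⁻¹' A = ⋃ k ∈ A, X ⁻¹' {k} := by
    ext ω; simp
  rw [h1, measure_biUnion A.to_countable
    (fun k _ l _ hkl => Set.disjoint_left.mpr (fun ω h1 h2 => hkl (by
      simp only [Set.mem_preimage, Set.mem_singleton_iff] at h1 h2; rw [← h1, ← h2])))
    (fun k _ => hX (measurableSet_singleton k))]
  exact tsum_congr fun k => hlaw k (Nat.pos_of_ne_zero (fun h => hA (h ▸ k.2)))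

/-- probability that n divides X -/
lemma aux_div (s : ℝ) (hs : 1 < s) (X : Ω → ℕ) (hX : Measurable X)
    (hlaw : ∀ k : ℕ, 0 < k →
      μ (X ⁻¹' {k}) = ENNReal.ofReal ((∑' m : ℕ+, (m : ℝ) ^ (-s))⁻¹ * (k : ℝ) ^ (-s)))
    (n : ℕ) (hn : 0 < n) :
    μ (X ⁻¹' {k | 0 < k ∧ n ∣ k}) = ENNReal.ofReal ((n : ℝ) ^ (-s)) := by
  set Z : ℝ := ∑' m : ℕ+, (m : ℝ) ^ (-s) with hZ
  have hZpos := aux_Z_pos hs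
  rw [aux_measure_preimage μ s X hX hlaw _ (by simp)]
  set A : Set ℕ := {k | 0 < k ∧ n ∣ k}
  -- summability on the subtype
  have hsum : Summable (fun k : A => Z⁻¹ * ((k : ℕ) : ℝ) ^ (-s)) := by
    have := ((aux_summable hs).mul_left Z⁻¹).comp_injective
      (Subtype.val_injective : Function.Injective ((↑) : A → ℕ))
    exact this
  rw [← ENNReal.ofReal_tsum_of_nonneg
    (fun k => mul_nonneg (inv_nonneg.mpr (le_of_lt hZpos)) (Real.rpow_nonneg (by positivity) _))
    hsum]
  congr 1
  -- equiv ℕ+ ≃ A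
  have hbij : Function.Bijective (fun m : ℕ+ => (⟨n * m, by
      exact ⟨Nat.mul_pos hn m.2, dvd_mul_right n m⟩⟩ : A)) := by
    constructor
    · intro a b hab
      have : n * (a : ℕ) = n * (b : ℕ) := congrArg Subtype.val hab
      exact PNat.coe_injective (Nat.eq_of_mul_eq_mul_left hn this)
    · rintro ⟨k, hk0, m, rfl⟩
      have hm : 0 < m := Nat.pos_of_mul_pos_left (by rwa [Nat.mul_comm] at hk0)
      exact ⟨⟨m, hm⟩, rfl⟩
  have := (Equiv.ofBijective _ hbij).tsum_eq (fun k : A => Z⁻¹ * ((k : ℕ) : ℝ) ^ (-s))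
  rw [← this]
  simp only [Equiv.ofBijective_apply]
  have hterm : ∀ m : ℕ+, Z⁻¹ * ((n * (m : ℕ) : ℕ) : ℝ) ^ (-s)
      = ((n : ℝ) ^ (-s) * Z⁻¹) * ((m : ℕ) : ℝ) ^ (-s) := by
    intro m
    push_cast
    rw [Real.mul_rpow (by positivity) (by positivity)]
    ring
  calc (∑' m : ℕ+, Z⁻¹ * ((n * (m : ℕ) : ℕ) : ℝ) ^ (-s))
      = ∑' m : ℕ+, ((n : ℝ) ^ (-s) * Z⁻¹) * ((m : ℕ) : ℝ) ^ (-s) := tsum_congr hterm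
    _ = ((n : ℝ) ^ (-s) * Z⁻¹) * Z := by rw [tsum_mul_left]
    _ = (n : ℝ) ^ (-s) := by rw [mul_assoc, inv_mul_cancel₀ (show Z ≠ 0 from hZpos.ne'), mul_one]

lemma aux_prod_pow_dvd (e : ℕ → ℕ) (k : ℕ) :
    ∀ T : Finset ℕ, (∀ p ∈ T, p.Prime) → (∀ p ∈ T, p ^ e p ∣ k) →
      (∏ p ∈ T, p ^ e p) ∣ k := by
  intro T
  induction T using Finset.induction_on with
  | empty => simp
  | @insert q T hqT ih =>
    intro hT h
    rw [Finset.prod_insert hqT]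
    refine Nat.Coprime.mul_dvd_of_dvd_of_dvd ?_ (h q (Finset.mem_insert_self q T))
      (ih (fun p hp => hT p (Finset.mem_insert_of_mem hp))
        (fun p hp => h p (Finset.mem_insert_of_mem hp)))
    refine Nat.Coprime.prod_right (fun p hp => Nat.Coprime.pow _ _ ?_)
    exact (Nat.coprime_primes (hT q (Finset.mem_insert_self q T))
      (hT p (Finset.mem_insert_of_mem hp))).mpr (fun hh => hqT (hh ▸ hp))

/-- Finset version of part 1 -/
lemma aux_ge (s : ℝ) (hs : 1 < s) (X : Ω → ℕ) (hX : Measurable X) (hpos : ∀ ω, 0 < X ω)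
    (hlaw : ∀ k : ℕ, 0 < k →
      μ (X ⁻¹' {k}) = ENNReal.ofReal ((∑' m : ℕ+, (m : ℝ) ^ (-s))⁻¹ * (k : ℝ) ^ (-s)))
    (T : Finset ℕ) (hT : ∀ p ∈ T, p.Prime) (e : ℕ → ℕ) :
    μ {ω | ∀ p ∈ T, e p ≤ (X ω).factorization p} =
      ENNReal.ofReal (∏ p ∈ T, (p : ℝ) ^ (-s * e p)) := by
  set n : ℕ := ∏ p ∈ T, p ^ e p with hn
  have hn0 : 0 < n := Finset.prod_pos (fun p hp => pow_pos (hT p hp).pos _)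
  have hset : {ω | ∀ p ∈ T, e p ≤ (X ω).factorization p} = X ⁻¹' {k | 0 < k ∧ n ∣ k} := by
    ext ω
    have hx := hpos ω
    simp only [Set.mem_setOf_eq, Set.mem_preimage]
    constructor
    · intro h
      exact ⟨hx, aux_prod_pow_dvd e _ T hT (fun p hp =>
        ((hT p hp).pow_dvd_iff_le_factorization hx.ne').mpr (h p hp))⟩
    · rintro ⟨-, hd⟩ p hp
      exact ((hT p hp).pow_dvd_iff_le_factorization hx.ne').mp
        ((Finset.dvd_prod_of_mem _ hp).trans hd)
  rw [hset, aux_div μ s hs X hX hlaw n hn0]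
  congr 1
  rw [hn]
  push_cast
  rw [← Real.finset_prod_rpow _ _ (fun p _ => by positivity)]
  refine Finset.prod_congr rfl (fun p hp => ?_)
  rw [← Real.rpow_natCast ((p:ℝ)) (e p), ← Real.rpow_mul (by positivity)]
  ring_nf

lemma aux_factor_nonneg {s : ℝ} (hs : 1 < s) {p : ℕ} (hp : p.Prime) :
    0 ≤ 1 - (p : ℝ) ^ (-s) :=
  sub_nonneg.mpr (Real.rpow_le_one_of_one_le_of_nonpos
    (by exact_mod_cast hp.one_lt.le) (by linarith))

lemma aux_meas (X : Ω → ℕ) (hX : Measurable X) (P : ℕ → Prop) :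
    MeasurableSet {ω | P (X ω)} := by
  have : {ω | P (X ω)} = X ⁻¹' {n | P n} := rfl
  rw [this]
  exact hX (show MeasurableSet[⊤] {n | P n} from trivial)

/-- mixed events: ≥ on `T`, = on `U` -/
lemma aux_H (s : ℝ) (hs : 1 < s) (X : Ω → ℕ) (hX : Measurable X) (hpos : ∀ ω, 0 < X ω)
    (hlaw : ∀ k : ℕ, 0 < k →
      μ (X ⁻¹' {k}) = ENNReal.ofReal ((∑' m : ℕ+, (m : ℝ) ^ (-s))⁻¹ * (k : ℝ) ^ (-s))) :
    ∀ (U T : Finset ℕ), Disjoint T U → (∀ p ∈ T, p.Prime) → (∀ p ∈ U, p.Prime) →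
      ∀ e : ℕ → ℕ,
      μ {ω | (∀ p ∈ T, e p ≤ (X ω).factorization p) ∧
          ∀ p ∈ U, (X ω).factorization p = e p} =
        ENNReal.ofReal ((∏ p ∈ T, (p : ℝ) ^ (-s * e p)) *
          ∏ p ∈ U, ((1 - (p : ℝ) ^ (-s)) * (p : ℝ) ^ (-s * e p))) := by
  intro U
  induction U using Finset.induction_on with
  | empty =>
    intro T _ hT _ e
    simp only [Finset.notMem_empty, false_implies, implies_true, and_true,
      Finset.prod_empty, mul_one]
    exact aux_ge μ s hs X hX hpos hlaw T hT e
  | @insert q U hqU ih =>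
    intro T hdisj hT hU e
    have hq : q.Prime := hU q (Finset.mem_insert_self q U)
    have hqT : q ∉ T := fun h => (Finset.disjoint_left.mp hdisj h) (Finset.mem_insert_self q U)
    have hU' : ∀ p ∈ U, p.Prime := fun p hp => hU p (Finset.mem_insert_of_mem hp)
    have hdisj' : Disjoint (insert q T) U := by
      rw [Finset.disjoint_left]
      rintro p hp hpU
      rcases Finset.mem_insert.mp hp with rfl | hp
      · exact hqU hpU
      · exact (Finset.disjoint_left.mp hdisj hp) (Finset.mem_insert_of_mem hpU)
    have hT' : ∀ p ∈ insert q T, p.Prime := by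
      intro p hp
      rcases Finset.mem_insert.mp hp with rfl | hp
      · exact hq
      · exact hT p hp
    set e' : ℕ → ℕ := Function.update e q (e q + 1) with he'
    set E1 : Set Ω := {ω | (∀ p ∈ insert q T, e p ≤ (X ω).factorization p) ∧
        ∀ p ∈ U, (X ω).factorization p = e p} with hE1
    set E2 : Set Ω := {ω | (∀ p ∈ insert q T, e' p ≤ (X ω).factorization p) ∧
        ∀ p ∈ U, (X ω).factorization p = e' p} with hE2
    have heT : ∀ p ∈ T, e' p = e p := fun p hp =>
      Function.update_of_ne (by rintro rfl; exact hqT hp) _ _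
    have heU : ∀ p ∈ U, e' p = e p := fun p hp =>
      Function.update_of_ne (by rintro rfl; exact hqU hp) _ _
    have heq : e' q = e q + 1 := Function.update_self _ _ _
    have hsub : E2 ⊆ E1 := by
      rintro ω ⟨h1, h2⟩
      constructor
      · intro p hp
        rcases Finset.mem_insert.mp hp with rfl | hp'
        · have := h1 p (Finset.mem_insert_self p T); rw [heq] at this; omega
        · have := h1 p hp; rwa [heT p hp'] at this
      · intro p hp
        rw [← heU p hp]; exact h2 p hp
    have hEdiff : {ω | (∀ p ∈ T, e p ≤ (X ω).factorization p) ∧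
        ∀ p ∈ insert q U, (X ω).factorization p = e p} = E1 \ E2 := by
      ext ω
      simp only [hE1, hE2, Set.mem_setOf_eq, Set.mem_diff]
      constructor
      · rintro ⟨h1, h2⟩
        have hq2 : (X ω).factorization q = e q := h2 q (Finset.mem_insert_self q U)
        refine ⟨⟨?_, fun p hp => h2 p (Finset.mem_insert_of_mem hp)⟩, ?_⟩
        · intro p hp
          rcases Finset.mem_insert.mp hp with rfl | hp'
          · omega
          · exact h1 p hp'
        · rintro ⟨g1, g2⟩
          have := g1 q (Finset.mem_insert_self q T)
          rw [heq] at this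
          omega
      · rintro ⟨⟨g1, g2⟩, hnot⟩
        have hge : e q ≤ (X ω).factorization q := g1 q (Finset.mem_insert_self q T)
        have hqeq : (X ω).factorization q = e q := by
          by_contra hne
          apply hnot
          refine ⟨fun p hp => ?_, fun p hp => ?_⟩
          · rcases Finset.mem_insert.mp hp with rfl | hp'
            · rw [heq]; omega
            · rw [heT p hp']; exact g1 p hp
          · rw [heU p hp]; exact g2 p hp
        exact ⟨fun p hp => g1 p (Finset.mem_insert_of_mem hp), fun p hp =>
          (Finset.mem_insert.mp hp).elim (fun h => h ▸ hqeq) (g2 p)⟩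
    have hmeas2 : MeasurableSet E2 := aux_meas X hX
      (fun n => (∀ p ∈ insert q T, e' p ≤ n.factorization p) ∧ ∀ p ∈ U, n.factorization p = e' p)
    rw [hEdiff, measure_diff hsub hmeas2.nullMeasurableSet (measure_ne_top μ E2),
      ih (insert q T) hdisj' hT' hU' e, ih (insert q T) hdisj' hT' hU' e']
    have hprodT : ∀ f : ℕ → ℕ, ∏ p ∈ insert q T, (p : ℝ) ^ (-s * f p)
        = (q : ℝ) ^ (-s * f q) * ∏ p ∈ T, (p : ℝ) ^ (-s * f p) := fun f =>
      Finset.prod_insert hqT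
    have hTe : ∏ p ∈ T, (p : ℝ) ^ (-s * e' p) = ∏ p ∈ T, (p : ℝ) ^ (-s * e p) :=
      Finset.prod_congr rfl (fun p hp => by rw [heT p hp])
    have hUe : ∏ p ∈ U, ((1 - (p : ℝ) ^ (-s)) * (p : ℝ) ^ (-s * e' p))
        = ∏ p ∈ U, ((1 - (p : ℝ) ^ (-s)) * (p : ℝ) ^ (-s * e p)) :=
      Finset.prod_congr rfl (fun p hp => by rw [heU p hp])
    rw [hprodT e, hprodT e', hTe, hUe, heq]
    set P : ℝ := ∏ p ∈ T, (p : ℝ) ^ (-s * e p)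
    set C : ℝ := ∏ p ∈ U, ((1 - (p : ℝ) ^ (-s)) * (p : ℝ) ^ (-s * e p))
    have hPpos : 0 ≤ P := Finset.prod_nonneg (fun p _ => Real.rpow_nonneg (by positivity) _)
    have hCpos : 0 ≤ C := Finset.prod_nonneg (fun p hp =>
      mul_nonneg (aux_factor_nonneg hs (hU' p hp)) (Real.rpow_nonneg (by positivity) _))
    have hqpos : (0:ℝ) < q := by exact_mod_cast hq.pos
    have hkey : (q : ℝ) ^ (-s * (e q + 1 : ℕ)) = (q : ℝ) ^ (-s * e q) * (q : ℝ) ^ (-s) := by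
      rw [← Real.rpow_add hqpos]
      push_cast
      ring_nf
    rw [← ENNReal.ofReal_sub _ (by positivity)]
    rw [Finset.prod_insert hqU]
    congr 1
    rw [hkey]
    ring

end Aux

theorem stmt_11 {Ω : Type*} [MeasurableSpace Ω] (μ : Measure Ω) [IsProbabilityMeasure μ]
    (s : ℝ) (hs : 1 < s) (X : Ω → ℕ) (hX : Measurable X)
    (hpos : ∀ ω, 0 < X ω)
    (hlaw : ∀ k : ℕ, 0 < k →
      μ (X ⁻¹' {k}) = ENNReal.ofReal ((∑' m : ℕ+, (m : ℝ) ^ (-s))⁻¹ * (k : ℝ) ^ (-s))) :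
    (∀ (r : ℕ) (p : Fin r → ℕ), (∀ i, (p i).Prime) → Function.Injective p →
      ∀ a : Fin r → ℕ,
        μ {ω | ∀ i, a i ≤ (X ω).factorization (p i)} =
          ENNReal.ofReal (∏ i, (p i : ℝ) ^ (-s * a i))) ∧
    (∀ (p k : ℕ), p.Prime →
      μ {ω | (X ω).factorization p = k} =
        ENNReal.ofReal ((1 - (p : ℝ) ^ (-s)) * (p : ℝ) ^ (-s * k))) ∧
    iIndepFun
      (fun (p : Nat.Primes) (ω : Ω) => (X ω).factorization p) μ := by
  classical
  have part2 : ∀ (p k : ℕ), p.Prime →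
      μ {ω | (X ω).factorization p = k} =
        ENNReal.ofReal ((1 - (p : ℝ) ^ (-s)) * (p : ℝ) ^ (-s * k)) := by
    intro p k hp
    have := aux_H μ s hs X hX hpos hlaw {p} ∅ (Finset.disjoint_empty_left _)
      (by simp) (by simpa using hp) (fun _ => k)
    simpa using this
  refine ⟨?_, part2, ?_⟩
  · -- part 1
    intro r p hp hinj a
    set T : Finset ℕ := Finset.image p Finset.univ with hT
    set e : ℕ → ℕ := Function.extend p a 0 with he
    have hTp : ∀ q ∈ T, q.Prime := by
      intro q hq
      obtain ⟨i, -, rfl⟩ := Finset.mem_image.mp hq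
      exact hp i
    have hset : {ω | ∀ i, a i ≤ (X ω).factorization (p i)} =
        {ω | ∀ q ∈ T, e q ≤ (X ω).factorization q} := by
      ext ω
      simp only [Set.mem_setOf_eq]
      constructor
      · intro h q hq
        obtain ⟨i, -, rfl⟩ := Finset.mem_image.mp hq
        rw [he, hinj.extend_apply]
        exact h i
      · intro h i
        have := h (p i) (Finset.mem_image.mpr ⟨i, Finset.mem_univ i, rfl⟩)
        rwa [he, hinj.extend_apply] at this
    rw [hset, aux_ge μ s hs X hX hpos hlaw T hTp e]
    congr 1
    rw [hT, Finset.prod_image (fun i _ j _ h => hinj h)]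
    refine Finset.prod_congr rfl (fun i _ => ?_)
    rw [he, hinj.extend_apply]
  · -- independence
    set f : Nat.Primes → Ω → ℕ := fun p ω => (X ω).factorization p with hf
    set π : Nat.Primes → Set (Set Ω) :=
      fun p => Set.range (fun k : ℕ => f p ⁻¹' {k}) with hπ
    have hmf : ∀ p : Nat.Primes, Measurable (f p) := by
      intro p
      exact (measurable_from_top (f := fun n : ℕ => n.factorization (p : ℕ))).comp hX
    have htop : (inferInstance : MeasurableSpace ℕ) =
        MeasurableSpace.generateFrom (Set.range fun k : ℕ => ({k} : Set ℕ)) := by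
      refine le_antisymm ?_ (MeasurableSpace.generateFrom_le ?_)
      · intro A _
        have hA : A = ⋃ k ∈ A, {k} := by ext; simp
        rw [hA]
        exact MeasurableSet.biUnion A.to_countable
          (fun k _ => MeasurableSpace.measurableSet_generateFrom ⟨k, rfl⟩)
      · rintro _ ⟨k, rfl⟩
        exact measurableSet_singleton k
    have h_ind : iIndepSets π μ := by
      rw [iIndepSets_iff]
      intro S g hg
      have hk : ∀ p ∈ S, ∃ k : ℕ, f p ⁻¹' {k} = g p := fun p hp => hg p hp
      set k : Nat.Primes → ℕ := fun p =>
        if h : ∃ n : ℕ, f p ⁻¹' {n} = g p then h.choose else 0 with hkdef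
      have hgk : ∀ p ∈ S, g p = f p ⁻¹' {k p} := by
        intro p hp
        rw [hkdef]
        simp only [dif_pos (hk p hp)]
        exact ((hk p hp).choose_spec).symm
      set V : Finset ℕ := S.image Subtype.val with hV
      set e : ℕ → ℕ := fun q => if h : q.Prime then k ⟨q, h⟩ else 0 with he
      have hep : ∀ p : Nat.Primes, e (p : ℕ) = k p := by
        intro p
        rw [he]
        simp only [dif_pos p.2]
        exact congrArg k (Subtype.ext rfl)
      have hVp : ∀ q ∈ V, q.Prime := by
        intro q hq
        obtain ⟨pq, -, rfl⟩ := Finset.mem_image.mp hq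
        exact pq.2
      have hinter : ⋂ p ∈ S, g p =
          {ω | ∀ q ∈ V, (X ω).factorization q = e q} := by
        ext ω
        simp only [Set.mem_iInter, Set.mem_setOf_eq]
        constructor
        · intro h q hq
          obtain ⟨pq, hpq, rfl⟩ := Finset.mem_image.mp hq
          have := h pq hpq
          rw [hgk pq hpq] at this
          simpa [hep pq, hf] using this
        · intro h pq hpq
          rw [hgk pq hpq]
          have := h (pq : ℕ) (Finset.mem_image.mpr ⟨pq, hpq, rfl⟩)
          simpa [hep pq, hf] using this
      rw [hinter]
      have := aux_H μ s hs X hX hpos hlaw V ∅ (Finset.disjoint_empty_left _)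
        (by simp) hVp e
      simp only [Finset.notMem_empty, false_implies, implies_true, true_and,
        Finset.prod_empty, one_mul] at this
      rw [this, ENNReal.ofReal_prod_of_nonneg (fun q hq =>
        mul_nonneg (aux_factor_nonneg hs (hVp q hq)) (Real.rpow_nonneg (by positivity) _))]
      rw [hV]; refine (Finset.prod_image (fun i _ j _ h => Subtype.val_injective h)).trans ?_
      refine Finset.prod_congr rfl (fun pq hpq => ?_)
      rw [hgk pq hpq]
      have hev : f pq ⁻¹' {k pq} = {ω | (X ω).factorization (pq : ℕ) = k pq} := rfl
      rw [hev, part2 (pq : ℕ) (k pq) pq.2, hep pq]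
    have h_pi : ∀ p : Nat.Primes, IsPiSystem (π p) := by
      rintro p _ ⟨a, rfl⟩ _ ⟨b, rfl⟩ hne
      obtain ⟨ω, hω⟩ := hne
      simp only [Set.mem_inter_iff, Set.mem_preimage, Set.mem_singleton_iff] at hω
      obtain ⟨h1, h2⟩ := hω
      have : a = b := h1 ▸ h2 ▸ rfl
      subst this
      exact ⟨a, by simp⟩
    have h_gen : ∀ p : Nat.Primes,
        MeasurableSpace.comap (f p) inferInstance = MeasurableSpace.generateFrom (π p) := by
      intro p
      rw [htop, MeasurableSpace.comap_generateFrom]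
      congr 1
      rw [hπ, ← Set.range_comp]
      rfl
    have h_le : ∀ p : Nat.Primes,
        MeasurableSpace.comap (f p) inferInstance ≤ (inferInstance : MeasurableSpace Ω) :=
      fun p => (hmf p).comap_le
    rw [iIndepFun_iff_iIndep]
    exact iIndepSets.iIndep h_le π h_pi h_gen h_ind
end

section
/- For real s > 1, ζ(s)·L(χ₁, s) = (1 − 3⁻ˢ)⁻¹ · Π_{p ≡ 1 (mod 3)} (1 − p⁻ˢ)⁻² · Π_{p ≡ 2 (mod 3)} (1 − p^{−2s})⁻¹. -/
open Real EulerProduct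

noncomputable def chi3 (n : ℕ) : ℝ :=
  if n % 3 = 1 then 1 else if n % 3 = 2 then -1 else 0

lemma chi3_mul (m n : ℕ) : chi3 (m * n) = chi3 m * chi3 n := by
  unfold chi3
  rw [Nat.mul_mod]
  have hm : m % 3 = 0 ∨ m % 3 = 1 ∨ m % 3 = 2 := by omega
  have hn : n % 3 = 0 ∨ n % 3 = 1 ∨ n % 3 = 2 := by omega
  rcases hm with h | h | h <;> rcases hn with h' | h' | h' <;> simp [h, h']

noncomputable def f1 (s : ℝ) (hs : s ≠ 0) : ℕ →*₀ ℝ where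
  toFun n := (n : ℝ) ^ (-s)
  map_zero' := by
    simp only [Nat.cast_zero]
    exact Real.zero_rpow (neg_ne_zero.mpr hs)
  map_one' := by simp
  map_mul' m n := by
    push_cast
    exact Real.mul_rpow (by positivity) (by positivity)

noncomputable def f2 (s : ℝ) (hs : s ≠ 0) : ℕ →*₀ ℝ where
  toFun n := chi3 n * (n : ℝ) ^ (-s)
  map_zero' := by
    simp only [Nat.cast_zero]
    rw [Real.zero_rpow (neg_ne_zero.mpr hs)]
    ring
  map_one' := by simp [chi3]
  map_mul' m n := by
    push_cast
    rw [chi3_mul, Real.mul_rpow (by positivity) (by positivity)]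
    ring

lemma summable_f1 {s : ℝ} (hs : 1 < s) (hs0 : s ≠ 0) :
    Summable fun n ↦ ‖f1 s hs0 n‖ := by
  have h : Summable fun n : ℕ ↦ (n : ℝ) ^ (-s) := Real.summable_nat_rpow.mpr (by linarith)
  refine h.congr fun n ↦ ?_
  simp only [f1, MonoidWithZeroHom.coe_mk, ZeroHom.coe_mk, Real.norm_eq_abs]
  exact (abs_of_nonneg (Real.rpow_nonneg (by positivity) _)).symm

lemma summable_f2 {s : ℝ} (hs : 1 < s) (hs0 : s ≠ 0) :
    Summable fun n ↦ ‖f2 s hs0 n‖ := by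
  have h : Summable fun n : ℕ ↦ |(n : ℝ) ^ (-s)| := (summable_f1 hs hs0).congr fun n ↦ by
    simp [f1, Real.norm_eq_abs]
  refine Summable.of_nonneg_of_le (fun _ ↦ norm_nonneg _) (fun n ↦ ?_) h
  simp only [f2, MonoidWithZeroHom.coe_mk, ZeroHom.coe_mk, norm_mul, Real.norm_eq_abs]
  have hb : |chi3 n| ≤ 1 := by unfold chi3; split_ifs <;> norm_num
  calc |chi3 n| * |(n : ℝ) ^ (-s)| ≤ 1 * |(n : ℝ) ^ (-s)| :=
        mul_le_mul_of_nonneg_right hb (abs_nonneg _)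
    _ = |(n : ℝ) ^ (-s)| := one_mul _

lemma tsum_pnat_eq {f : ℕ →*₀ ℝ} : (∑' n : ℕ+, f (n : ℕ)) = ∑' n : ℕ, f n := by
  refine Function.Injective.tsum_eq (g := fun n : ℕ+ ↦ (n : ℕ))
    (fun a b h ↦ PNat.coe_injective h) ?_
  intro n hn
  rcases Nat.eq_zero_or_pos n with rfl | h
  · exact absurd (map_zero f) hn
  · exact ⟨⟨n, h⟩, rfl⟩


lemma summable_real_log_one_sub {ι : Type*} {x : ι → ℝ} (hx : ∀ i, x i < 1)
    (hsum : Summable x) : Summable fun i ↦ Real.log (1 - x i) := by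
  have h1 : Summable fun i ↦ Complex.log (1 - (x i : ℂ)) :=
    (Complex.summable_ofReal.mpr hsum).clog_one_sub
  have h2 : ∀ i, Complex.log (1 - (x i : ℂ)) = ((Real.log (1 - x i) : ℝ) : ℂ) := by
    intro i
    rw [← Complex.ofReal_one, ← Complex.ofReal_sub, Complex.ofReal_log (by linarith [hx i])]
  exact Complex.summable_ofReal.mp ((h1.congr h2))

lemma multipliable_of_pos_of_summable_log {ι : Type*} {f : ι → ℝ} (h1 : ∀ i, 0 < f i)
    (h2 : Summable fun i ↦ Real.log (f i)) : Multipliable f :=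
  Real.multipliable_of_summable_log h1 h2

theorem stmt_18 (s : ℝ) (hs : 1 < s) :
    (∑' n : ℕ+, (n : ℝ) ^ (-s)) *
      (∑' n : ℕ+, (if (n : ℕ) % 3 = 1 then (1 : ℝ) else if (n : ℕ) % 3 = 2 then -1 else 0) *
        (n : ℝ) ^ (-s)) =
      (1 - (3 : ℝ) ^ (-s))⁻¹ *
        (∏' p : {p : Nat.Primes // (p : ℕ) % 3 = 1}, (1 - ((p : ℕ) : ℝ) ^ (-s))⁻¹ ^ 2) *
        (∏' p : {p : Nat.Primes // (p : ℕ) % 3 = 2}, (1 - ((p : ℕ) : ℝ) ^ (-2 * s))⁻¹) := by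
  have hs0 : s ≠ 0 := by intro h; rw [h] at hs; linarith
  -- rewrite the PNat sums as sums over ℕ
  have hsum1 : (∑' n : ℕ+, (n : ℝ) ^ (-s)) = ∑' n : ℕ, f1 s hs0 n := by
    rw [← tsum_pnat_eq]
    exact tsum_congr fun n ↦ by simp [f1]
  have hsum2 : (∑' n : ℕ+, (if (n : ℕ) % 3 = 1 then (1 : ℝ) else if (n : ℕ) % 3 = 2 then -1 else 0) *
        (n : ℝ) ^ (-s)) = ∑' n : ℕ, f2 s hs0 n := by
    rw [← tsum_pnat_eq]
    exact tsum_congr fun n ↦ by simp [f2, chi3]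
  rw [hsum1, hsum2]
  -- Euler products
  have hp1 := eulerProduct_completely_multiplicative_hasProd (summable_f1 hs hs0)
  have hp2 := eulerProduct_completely_multiplicative_hasProd (summable_f2 hs hs0)
  rw [← hp1.tprod_eq, ← hp2.tprod_eq, ← Multipliable.tprod_mul hp1.multipliable hp2.multipliable]
  -- the combined factor
  set g : Nat.Primes → ℝ := fun p ↦ (1 - f1 s hs0 p)⁻¹ * (1 - f2 s hs0 p)⁻¹ with hg
  have hmulg : Multipliable g := hp1.multipliable.mul hp2.multipliable
  -- partition the primes by residue mod 3
  set S0 : Set Nat.Primes := {p | (p : ℕ) % 3 = 0} with hS0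
  set S1 : Set Nat.Primes := {p | (p : ℕ) % 3 = 1} with hS1
  set S2 : Set Nat.Primes := {p | (p : ℕ) % 3 = 2} with hS2
  have hsplit : ∀ p, g p = S0.mulIndicator g p * S1.mulIndicator g p * S2.mulIndicator g p := by
    intro p
    have h3 : (p : ℕ) % 3 = 0 ∨ (p : ℕ) % 3 = 1 ∨ (p : ℕ) % 3 = 2 := by omega
    rcases h3 with h | h | h
    · rw [Set.mulIndicator_of_mem (show p ∈ S0 from h) g,
        Set.mulIndicator_of_notMem (show p ∉ S1 by simp [hS1, Set.mem_setOf_eq, h]) g,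
        Set.mulIndicator_of_notMem (show p ∉ S2 by simp [hS2, Set.mem_setOf_eq, h]) g]
      ring
    · rw [Set.mulIndicator_of_notMem (show p ∉ S0 by simp [hS0, Set.mem_setOf_eq, h]) g,
        Set.mulIndicator_of_mem (show p ∈ S1 from h) g,
        Set.mulIndicator_of_notMem (show p ∉ S2 by simp [hS2, Set.mem_setOf_eq, h]) g]
      ring
    · rw [Set.mulIndicator_of_notMem (show p ∉ S0 by simp [hS0, Set.mem_setOf_eq, h]) g,
        Set.mulIndicator_of_notMem (show p ∉ S1 by simp [hS1, Set.mem_setOf_eq, h]) g,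
        Set.mulIndicator_of_mem (show p ∈ S2 from h) g]
      ring
  -- positivity and summability facts
  have hplt : ∀ p : Nat.Primes, 1 < ((p : ℕ) : ℝ) := fun p ↦ by
    exact_mod_cast p.prop.one_lt
  have hf1lt : ∀ p : Nat.Primes, f1 s hs0 (p : ℕ) < 1 := fun p ↦ by
    simp only [f1, MonoidWithZeroHom.coe_mk, ZeroHom.coe_mk]
    exact Real.rpow_lt_one_of_one_lt_of_neg (hplt p) (by linarith)
  have hf1nonneg : ∀ p : Nat.Primes, 0 ≤ f1 s hs0 (p : ℕ) := fun p ↦ by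
    simp only [f1, MonoidWithZeroHom.coe_mk, ZeroHom.coe_mk]
    positivity
  have hf2le : ∀ p : Nat.Primes, |f2 s hs0 (p : ℕ)| ≤ f1 s hs0 (p : ℕ) := fun p ↦ by
    simp only [f1, f2, MonoidWithZeroHom.coe_mk, ZeroHom.coe_mk, abs_mul]
    rw [abs_of_nonneg (Real.rpow_nonneg (by positivity) _)]
    have : |chi3 (p : ℕ)| ≤ 1 := by unfold chi3; split_ifs <;> norm_num
    calc |chi3 (p : ℕ)| * ((p : ℕ) : ℝ) ^ (-s) ≤ 1 * ((p : ℕ) : ℝ) ^ (-s) :=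
          mul_le_mul_of_nonneg_right this (Real.rpow_nonneg (by positivity) _)
      _ = _ := one_mul _
  have hpos1 : ∀ p : Nat.Primes, 0 < 1 - f1 s hs0 (p : ℕ) := fun p ↦ by
    linarith [hf1lt p]
  have hpos2 : ∀ p : Nat.Primes, 0 < 1 - f2 s hs0 (p : ℕ) := fun p ↦ by
    have := hf2le p; have := hf1lt p
    have h := le_abs_self (f2 s hs0 (p : ℕ))
    linarith
  have hgpos : ∀ p, 0 < g p := fun p ↦ by
    rw [hg]
    exact mul_pos (inv_pos.mpr (hpos1 p)) (inv_pos.mpr (hpos2 p))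
  have hsub1 : Summable fun p : Nat.Primes ↦ f1 s hs0 (p : ℕ) :=
    ((summable_f1 hs hs0).of_norm).subtype {p | Nat.Prime p}
  have hsub2 : Summable fun p : Nat.Primes ↦ f2 s hs0 (p : ℕ) :=
    ((summable_f2 hs hs0).of_norm).subtype {p | Nat.Prime p}
  have hlog1 : Summable fun p : Nat.Primes ↦ Real.log (1 - f1 s hs0 (p : ℕ)) :=
    summable_real_log_one_sub (fun p ↦ hf1lt p) hsub1
  have hlog2 : Summable fun p : Nat.Primes ↦ Real.log (1 - f2 s hs0 (p : ℕ)) := by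
    refine summable_real_log_one_sub (fun p ↦ ?_) hsub2
    have h1 := hf2le p
    have h2 := hf1lt p
    have h := le_abs_self (f2 s hs0 (p : ℕ))
    linarith
  have hlogg : Summable fun p : Nat.Primes ↦ Real.log (g p) := by
    refine ((hlog1.neg.add hlog2.neg).congr fun p ↦ ?_)
    rw [hg]
    rw [Real.log_mul (ne_of_gt (inv_pos.mpr (hpos1 p))) (ne_of_gt (inv_pos.mpr (hpos2 p))), Real.log_inv, Real.log_inv]
  have mulInd : ∀ S : Set Nat.Primes, Multipliable (S.mulIndicator g) := by
    intro S
    refine multipliable_of_pos_of_summable_log (fun p ↦ ?_) ?_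
    · by_cases hp : p ∈ S
      · rw [Set.mulIndicator_of_mem hp]; exact hgpos p
      · rw [Set.mulIndicator_of_notMem hp]; norm_num
    · have : (fun p ↦ Real.log (S.mulIndicator g p)) = S.indicator fun p ↦ Real.log (g p) := by
        funext p
        by_cases hp : p ∈ S
        · rw [Set.mulIndicator_of_mem hp, Set.indicator_of_mem hp]
        · rw [Set.mulIndicator_of_notMem hp, Set.indicator_of_notMem hp, Real.log_one]
      rw [this]
      exact hlogg.indicator S
  have hm0 : Multipliable (S0.mulIndicator g) := mulInd S0
  have hm1 : Multipliable (S1.mulIndicator g) := mulInd S1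
  have hm2 : Multipliable (S2.mulIndicator g) := mulInd S2
  have step1 : (∏' p : Nat.Primes, g p)
      = (∏' p, S0.mulIndicator g p) * (∏' p, S1.mulIndicator g p) *
          (∏' p, S2.mulIndicator g p) := by
    rw [← Multipliable.tprod_mul hm0 hm1, ← Multipliable.tprod_mul (hm0.mul hm1) hm2]
    exact tprod_congr hsplit
  -- per-class values of g
  have key1 : ∀ q : Nat.Primes, (q : ℕ) % 3 = 1 →
      g q = (1 - ((q : ℕ) : ℝ) ^ (-s))⁻¹ ^ 2 := by
    intro q hq
    have hchi : chi3 (q : ℕ) = 1 := by simp [chi3, hq]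
    show (1 - ((q : ℕ) : ℝ) ^ (-s))⁻¹ * (1 - chi3 (q : ℕ) * ((q : ℕ) : ℝ) ^ (-s))⁻¹ = _
    rw [hchi, one_mul, sq]
  have key2 : ∀ q : Nat.Primes, (q : ℕ) % 3 = 2 →
      g q = (1 - ((q : ℕ) : ℝ) ^ (-2 * s))⁻¹ := by
    intro q hq
    have hchi : chi3 (q : ℕ) = -1 := by simp [chi3, hq]
    show (1 - ((q : ℕ) : ℝ) ^ (-s))⁻¹ * (1 - chi3 (q : ℕ) * ((q : ℕ) : ℝ) ^ (-s))⁻¹ = _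
    rw [hchi]
    have hx2 : ((q : ℕ) : ℝ) ^ (-2 * s) = (((q : ℕ) : ℝ) ^ (-s)) ^ 2 := by
      rw [← Real.rpow_natCast (((q : ℕ) : ℝ) ^ (-s)) 2, ← Real.rpow_mul (by positivity)]
      norm_num
      ring_nf
    rw [hx2, ← mul_inv]
    congr 1
    ring
  rw [step1]
  congr 1
  congr 1
  · -- the p = 3 factor
    have h30 : (⟨3, Nat.prime_three⟩ : Nat.Primes) ∈ S0 := by
      show (3 : ℕ) % 3 = 0; norm_num
    have hsingle : (∏' p, S0.mulIndicator g p) = S0.mulIndicator g ⟨3, Nat.prime_three⟩ := by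
      refine tprod_eq_mulSingle _ fun p hp ↦ ?_
      refine Set.mulIndicator_of_notMem (show p ∉ S0 from fun hmem ↦ ?_) g
      have hdvd : (3 : ℕ) ∣ (p : ℕ) := Nat.dvd_of_mod_eq_zero hmem
      have heq := (Nat.prime_dvd_prime_iff_eq Nat.prime_three p.prop).mp hdvd
      exact hp (Subtype.ext heq.symm)
    rw [hsingle]; refine (Set.mulIndicator_of_mem h30 g).trans ?_
    show (1 - (((3 : ℕ) : ℕ) : ℝ) ^ (-s))⁻¹ *
      (1 - chi3 ((3 : ℕ)) * (((3 : ℕ) : ℕ) : ℝ) ^ (-s))⁻¹ = (1 - (3 : ℝ) ^ (-s))⁻¹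
    norm_num [chi3]
  · -- primes ≡ 1 mod 3
    rw [← tprod_subtype S1 g]
    exact tprod_congr fun p ↦ key1 p.1 p.2
  · -- primes ≡ 2 mod 3
    rw [← tprod_subtype S2 g]
    exact tprod_congr fun p ↦ key2 p.1 p.2
end
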